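/- arXiv:1002.3024 — 7 statements merged into one kernel-verified Lean document; each statement's English description precedes it below -/
import Mathlib

section
/- Let x = (x_1,…,x_k) and y = (y_1,…,y_k) be two k-tuples of elements of the binary Hamming space H_n. There exist a permutation σ of the n coordinates and a translation vector t ∈ F_2^n such that y_i equals x_i with coordinates permuted by σ and then translated by t (simultaneously for all i = 1,…,k) if and only if the symmetrized weight distributions of x and y coincide, i.e. n_w(x) = n_w(y) for every w ∈ F_2^{k-1}. -/
/-!
Subtracting the first word, `x_i ↦ x_i - x_0`, kills the translation part of the action, so
`x` and `y` lie in one orbit iff their "difference columns" `j ↦ (x_{i+1} j - x_0 j)_i` differ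
by a permutation of coordinates, i.e. iff every value is taken equally often. Over `F_2` the
column of `x` at `j` is `0w` or `1w̄` exactly when its difference column is `w`, so that count is
the symmetrized weight `n_w(x)`.
-/

/-- `nU u x` is the number of coordinates `j` where the column
`((x 0) j, …, (x k) j)` equals `u`. -/
def nU {n k : ℕ} (u : Fin k → ZMod 2) (x : Fin k → Fin n → ZMod 2) : ℕ :=
  (Finset.univ.filter fun j : Fin n => ∀ i, x i j = u i).card

/-- The symmetrized weight distribution `n_w(x) = n_{0w}(x) + n_{1 w̄}(x)`. -/
def nSym {n k : ℕ} (w : Fin k → ZMod 2) (x : Fin (k + 1) → Fin n → ZMod 2) : ℕ :=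
  nU (Fin.cons 0 w) x + nU (Fin.cons 1 (fun i => w i + 1)) x

open Finset

theorem Equiv.Perm.exists_comp_eq_iff_card_fiber_eq {α β : Type*} [Fintype α] [DecidableEq β]
    (f g : α → β) :
    (∃ σ : Equiv.Perm α, ∀ a, f (σ a) = g a) ↔ ∀ b, #{a | f a = b} = #{a | g a = b} := by
  constructor
  · rintro ⟨σ, hσ⟩ b
    rw [← Fintype.card_subtype, ← Fintype.card_subtype]
    exact Fintype.card_congr (σ.subtypeEquiv fun a => by rw [hσ]).symm
  · intro h
    have fiberEquiv : ∀ b, {a // g a = b} ≃ {a // f a = b} := fun b =>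
      Fintype.equivOfCardEq (by rw [Fintype.card_subtype, Fintype.card_subtype, h])
    exact ⟨Equiv.ofFiberEquiv fiberEquiv, Equiv.ofFiberEquiv_map fiberEquiv⟩

section ColumnDiff

variable {ι G : Type*} [AddCommGroup G] {k : ℕ}

def columnDiff (x : Fin (k + 1) → ι → G) (j : ι) : Fin k → G :=
  fun i => x i.succ j - x 0 j

theorem column_eq_cons_add_iff (x : Fin (k + 1) → ι → G) (j : ι) (a : G) (w : Fin k → G) :
    (∀ i, x i j = (Fin.cons a (fun i => w i + a) : Fin (k + 1) → G) i) ↔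
      x 0 j = a ∧ columnDiff x j = w := by
  simp only [Fin.forall_fin_succ, Fin.cons_zero, Fin.cons_succ, funext_iff, columnDiff,
    sub_eq_iff_eq_add]
  exact and_congr_right fun h => by subst h; rfl

theorem exists_perm_translate_iff_columnDiff (x y : Fin (k + 1) → ι → G) :
    (∃ σ : Equiv.Perm ι, ∃ t : ι → G, ∀ i j, y i j = x i (σ j) + t j) ↔
      ∃ σ : Equiv.Perm ι, ∀ j, columnDiff x (σ j) = columnDiff y j := by
  constructor
  · rintro ⟨σ, t, h⟩
    exact ⟨σ, fun j => funext fun i => by simp only [columnDiff, h, add_sub_add_right_eq_sub]⟩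
  · rintro ⟨σ, h⟩
    refine ⟨σ, fun j => y 0 j - x 0 (σ j), Fin.cases (fun j => (add_sub_cancel _ _).symm) ?_⟩
    intro i j
    have hdiff : x i.succ (σ j) - x 0 (σ j) = y i.succ j - y 0 j := congrFun (h j) i
    calc y i.succ j = (y i.succ j - y 0 j) + y 0 j := (sub_add_cancel _ _).symm
      _ = x i.succ (σ j) + (y 0 j - x 0 (σ j)) := by rw [← hdiff]; abel

end ColumnDiff

theorem nU_cons_add {n k : ℕ} (x : Fin (k + 1) → Fin n → ZMod 2) (a : ZMod 2)
    (w : Fin k → ZMod 2) :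
    nU (Fin.cons a fun i => w i + a) x = #{j | x 0 j = a ∧ columnDiff x j = w} := by
  simp only [nU, column_eq_cons_add_iff]

theorem nSym_eq_card_columnDiff_eq {n k : ℕ} (w : Fin k → ZMod 2)
    (x : Fin (k + 1) → Fin n → ZMod 2) :
    nSym w x = #{j | columnDiff x j = w} := by
  have hzero := nU_cons_add x 0 w
  simp only [add_zero] at hzero
  have eq_one_iff : ∀ a : ZMod 2, a = 1 ↔ ¬a = 0 := by decide
  rw [nSym, hzero, nU_cons_add,
    ← card_filter_add_card_filter_not (s := {j | columnDiff x j = w}) (fun j => x 0 j = 0),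
    filter_filter, filter_filter]
  simp only [eq_one_iff, and_comm]

/-- Two tuples of points of the Hamming space are in the same orbit under the
automorphism group (permutations of coordinates and translations) iff their
symmetrized weight distributions coincide. -/
theorem orbit_iff_symmetrized_weight_distribution {n k : ℕ}
    (x y : Fin (k + 1) → Fin n → ZMod 2) :
    (∃ σ : Equiv.Perm (Fin n), ∃ t : Fin n → ZMod 2,
        ∀ i j, y i j = x i (σ j) + t j) ↔
      ∀ w : Fin k → ZMod 2, nSym w x = nSym w y := by
  simp only [exists_perm_translate_iff_columnDiff, Equiv.Perm.exists_comp_eq_iff_card_fiber_eq,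
    nSym_eq_card_columnDiff_eq]
end

section
/- Triangular inequality for the generalized Hamming distance: for all x_1,…,x_k ∈ H_n with k ≥ 2 and all y ∈ H_n, (k-1) · d(x_1,…,x_k) ≤ ∑_{i=1}^k d(x_1,…,x_{i-1}, y, x_{i+1},…,x_k), where in the i-th summand x_i is replaced by y. -/
/-! The inequality holds coordinate by coordinate. If the points disagree at a coordinate,
then replacing `x_i` by `y` makes them agree there for at most one index `i`: agreement after
replacing two different indices would force every `x_a` to equal `y` at that coordinate. -/

/-- The generalized Hamming distance of a `k`-tuple of points of `H_n`:
the number of coordinates where the points are not all equal. -/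
def gdist {n k : ℕ} (x : Fin k → Fin n → ZMod 2) : ℕ :=
  (Finset.univ.filter fun j : Fin n => ¬ ∀ i i' : Fin k, x i j = x i' j).card

open Finset Function

section

variable {ι β : Type*} [DecidableEq ι]

theorem eq_of_update_const_of_update_const {v : ι → β} {b : β} {i₁ i₂ : ι} (hne : i₁ ≠ i₂)
    (h₁ : ∀ a a', update v i₁ b a = update v i₁ b a')
    (h₂ : ∀ a a', update v i₂ b a = update v i₂ b a') (a : ι) : v a = b := by
  have off (i : ι) (hi : ∀ a a', update v i b a = update v i b a') (a : ι) (ha : a ≠ i) :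
      v a = b := by
    simpa [update_of_ne ha] using hi a i
  by_cases ha : a = i₁
  · exact ha ▸ off i₂ h₂ i₁ hne
  · exact off i₁ h₁ a ha

variable [Fintype ι] [DecidableEq β]

theorem card_filter_update_const_le_one {v : ι → β} (hv : ¬ ∀ a a', v a = v a') (b : β) :
    #{i | ∀ a a', update v i b a = update v i b a'} ≤ 1 := by
  refine card_le_one.2 fun i₁ h₁ i₂ h₂ => by_contra fun hne => hv fun a a' => ?_
  simp only [mem_filter, mem_univ, true_and] at h₁ h₂
  have hb := eq_of_update_const_of_update_const hne h₁ h₂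
  rw [hb a, hb a']

theorem card_sub_one_le_card_filter_update_not_const {v : ι → β} (hv : ¬ ∀ a a', v a = v a')
    (b : β) :
    Fintype.card ι - 1 ≤ #{i | ¬ ∀ a a', update v i b a = update v i b a'} := by
  have := card_filter_update_const_le_one hv b
  rw [filter_not, card_sdiff_of_subset (filter_subset _ _), card_univ]
  omega

end

theorem gdist_triangle_general {n k : ℕ}
    (x : Fin k → Fin n → ZMod 2) (y : Fin n → ZMod 2) :
    (k - 1) * gdist x ≤ ∑ i : Fin k, gdist (Function.update x i y) := by
  simp only [gdist, card_filter, mul_sum]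
  rw [sum_comm]
  refine sum_le_sum fun j _ => ?_
  by_cases hx : ∀ i i', x i j = x i' j
  · rw [if_neg (not_not.2 hx), mul_zero]
    exact Nat.zero_le _
  · rw [if_pos hx, mul_one, ← card_filter]
    simpa only [Fintype.card_fin, update_apply, apply_ite (fun f : Fin n → ZMod 2 => f j)] using
      card_sub_one_le_card_filter_update_not_const hx (y j)

/-- Triangular inequality for the generalized Hamming distance:
`(k-1)·d(x₁,…,x_k) ≤ ∑ᵢ d(x₁,…,x_{i-1}, y, x_{i+1},…,x_k)`. -/
theorem gdist_triangle {n k : ℕ} (hk : 2 ≤ k)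
    (x : Fin k → Fin n → ZMod 2) (y : Fin n → ZMod 2) :
    (k - 1) * gdist x ≤ ∑ i : Fin k, gdist (Function.update x i y) :=
  gdist_triangle_general x y
end

section
/- For all x_1, x_2, x_3 ∈ H_n, the radius of the triple equals the maximum of the radii of the pairs: r(x_1,x_2,x_3) = max( r(x_1,x_2), r(x_2,x_3), r(x_3,x_1) ) = max( ⌈d(x_1,x_2)/2⌉, ⌈d(x_2,x_3)/2⌉, ⌈d(x_3,x_1)/2⌉ ). -/
/-- The radius of a `k`-tuple of points of `H_n`:
the smallest radius of a Hamming ball containing all the points,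
i.e. `min_y max_i d(y, xᵢ)`. -/
def radius {n k : ℕ} (x : Fin k → Fin n → ZMod 2) : ℕ :=
  Finset.inf' Finset.univ Finset.univ_nonempty
    (fun y : Fin n → ZMod 2 => Finset.univ.sup fun i => hammingDist y (x i))

/-!
The coordinatewise majority `m` of three binary words is a median: it lies on a geodesic between
any two of them, so with `a = d(m,x₁)`, `b = d(m,x₂)`, `c = d(m,x₃)` the pairwise distances are
`a + b`, `b + c`, `c + a`. If all three are at most `M = max ⌈d(xᵢ,xⱼ)/2⌉`, then `m` is a centre.
Otherwise at most one of them, say `a`, exceeds `M` (as `a + b ≤ 2M`), and moving `m` by `a - M`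
steps towards `x₁` gives a centre. The lower bound `⌈d(xᵢ,xⱼ)/2⌉ ≤ r` is the triangle inequality.
-/

open Finset

section Hamming

variable {ι : Type*} [Fintype ι] {β : ι → Type*} [∀ i, DecidableEq (β i)]

theorem hammingDist_add_hammingDist_of_forall {x y m : ∀ i, β i}
    (hm : ∀ i, m i = x i ∨ m i = y i) :
    hammingDist x m + hammingDist m y = hammingDist x y := by
  simp only [hammingDist, card_filter, ← sum_add_distrib]
  refine sum_congr rfl fun i _ => ?_
  rcases hm i with h | h <;> simp [h]

theorem exists_hammingDist_eq_of_le [DecidableEq ι] (x y : ∀ i, β i) {k : ℕ}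
    (hk : k ≤ hammingDist x y) :
    ∃ z, hammingDist x z = k ∧ hammingDist z y = hammingDist x y - k := by
  obtain ⟨T, hT, rfl⟩ := exists_subset_card_eq hk
  let z : ∀ i, β i := fun i => if i ∈ T then y i else x i
  have hxz : hammingDist x z = #T := by
    rw [hammingDist]
    congr 1
    ext i
    by_cases hi : i ∈ T
    · simpa [z, hi] using (mem_filter.mp (hT hi)).2
    · simp [z, hi]
  have hz : ∀ i, z i = x i ∨ z i = y i := fun i => by
    by_cases hi : i ∈ T <;> simp [z, hi]
  refine ⟨z, hxz, ?_⟩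
  have := hammingDist_add_hammingDist_of_forall hz
  omega

theorem exists_hammingDist_le_of_near_median [DecidableEq ι] {u v w m : ∀ i, β i} {M : ℕ}
    (hv : hammingDist m v ≤ M) (hw : hammingDist m w ≤ M)
    (huv : hammingDist m u + hammingDist m v ≤ 2 * M)
    (huw : hammingDist m u + hammingDist m w ≤ 2 * M) :
    ∃ y, hammingDist y u ≤ M ∧ hammingDist y v ≤ M ∧ hammingDist y w ≤ M := by
  obtain ⟨y, hmy, hyu⟩ := exists_hammingDist_eq_of_le m u (Nat.sub_le (hammingDist m u) M)
  have hyv := hammingDist_triangle y m v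
  have hyw := hammingDist_triangle y m w
  rw [hammingDist_comm y m] at hyv hyw
  exact ⟨y, by omega, by omega, by omega⟩

end Hamming

section Median

variable {ι : Type*} [Fintype ι]

theorem exists_median (u v w : ι → ZMod 2) : ∃ m,
    hammingDist m u + hammingDist m v = hammingDist u v ∧
    hammingDist m v + hammingDist m w = hammingDist v w ∧
    hammingDist m w + hammingDist m u = hammingDist w u := by
  have majority : ∀ a b c : ZMod 2, let m := if b = c then b else a
      (m = a ∨ m = b) ∧ (m = b ∨ m = c) ∧ (m = c ∨ m = a) := by decide
  have between {x y m : ι → ZMod 2} (h : ∀ i, m i = x i ∨ m i = y i) :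
      hammingDist m x + hammingDist m y = hammingDist x y := by
    rw [hammingDist_comm m]
    exact hammingDist_add_hammingDist_of_forall h
  exact ⟨_, between fun i => (majority (u i) (v i) (w i)).1,
    between fun i => (majority (u i) (v i) (w i)).2.1,
    between fun i => (majority (u i) (v i) (w i)).2.2⟩

theorem exists_hammingDist_le_of_pairwise_le_two_mul [DecidableEq ι] (u v w : ι → ZMod 2)
    {M : ℕ} (huv : hammingDist u v ≤ 2 * M) (hvw : hammingDist v w ≤ 2 * M)
    (hwu : hammingDist w u ≤ 2 * M) :
    ∃ y, hammingDist y u ≤ M ∧ hammingDist y v ≤ M ∧ hammingDist y w ≤ M := by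
  obtain ⟨m, hmuv, hmvw, hmwu⟩ := exists_median u v w
  by_cases hv : hammingDist m v ≤ M <;> by_cases hw : hammingDist m w ≤ M
  · exact exists_hammingDist_le_of_near_median hv hw (by omega) (by omega)
  · obtain ⟨y, hyw, hyu, hyv⟩ :=
      exists_hammingDist_le_of_near_median (u := w) (v := u) (w := v) (m := m) (M := M)
        (by omega) hv (by omega) (by omega)
    exact ⟨y, hyu, hyv, hyw⟩
  · obtain ⟨y, hyv, hyw, hyu⟩ :=
      exists_hammingDist_le_of_near_median (u := v) (v := w) (w := u) (m := m) (M := M)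
        hw (by omega) (by omega) (by omega)
    exact ⟨y, hyu, hyv, hyw⟩
  · omega

end Median

section Radius

variable {n : ℕ}

theorem radius_le_of_forall_hammingDist_le {k : ℕ} {x : Fin k → Fin n → ZMod 2}
    {M : ℕ} (y : Fin n → ZMod 2) (h : ∀ i, hammingDist y (x i) ≤ M) : radius x ≤ M :=
  (inf'_le _ (mem_univ y)).trans (Finset.sup_le fun i _ => h i)

theorem hammingDist_add_one_div_two_le_radius {k : ℕ} (x : Fin k → Fin n → ZMod 2)
    (i j : Fin k) :
    (hammingDist (x i) (x j) + 1) / 2 ≤ radius x := by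
  refine le_inf' _ _ fun y _ => ?_
  have hi := le_sup (f := fun l => hammingDist y (x l)) (mem_univ i)
  have hj := le_sup (f := fun l => hammingDist y (x l)) (mem_univ j)
  have := hammingDist_triangle_left (x i) (x j) y
  omega

theorem radius_pair (u v : Fin n → ZMod 2) : radius ![u, v] = (hammingDist u v + 1) / 2 := by
  refine le_antisymm ?_ (hammingDist_add_one_div_two_le_radius ![u, v] 0 1)
  obtain ⟨y, huy, hyv⟩ := exists_hammingDist_eq_of_le u v (k := (hammingDist u v + 1) / 2)
    (by omega)
  refine radius_le_of_forall_hammingDist_le y fun i => ?_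
  fin_cases i
  · simp [hammingDist_comm y, huy]
  · simp only [Fin.mk_one, Matrix.cons_val_one, Matrix.cons_val_fin_one, hyv]
    omega

end Radius

/-- The radius of three points is the maximum of the radii of the pairs,
which is the maximum of the ceilings of the half pairwise distances. -/
theorem radius_three {n : ℕ} (x₁ x₂ x₃ : Fin n → ZMod 2) :
    radius ![x₁, x₂, x₃] =
        max (radius ![x₁, x₂]) (max (radius ![x₂, x₃]) (radius ![x₃, x₁])) ∧
      radius ![x₁, x₂, x₃] =
        max ((hammingDist x₁ x₂ + 1) / 2)
          (max ((hammingDist x₂ x₃ + 1) / 2) ((hammingDist x₃ x₁ + 1) / 2)) := by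
  set M := max ((hammingDist x₁ x₂ + 1) / 2)
    (max ((hammingDist x₂ x₃ + 1) / 2) ((hammingDist x₃ x₁ + 1) / 2)) with hM
  have lower : M ≤ radius ![x₁, x₂, x₃] :=
    max_le (hammingDist_add_one_div_two_le_radius ![x₁, x₂, x₃] 0 1)
      (max_le (hammingDist_add_one_div_two_le_radius ![x₁, x₂, x₃] 1 2)
        (hammingDist_add_one_div_two_le_radius ![x₁, x₂, x₃] 2 0))
  obtain ⟨y, hy₁, hy₂, hy₃⟩ :=
    exists_hammingDist_le_of_pairwise_le_two_mul x₁ x₂ x₃ (M := M) (by omega) (by omega)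
      (by omega)
  have upper : radius ![x₁, x₂, x₃] ≤ M :=
    radius_le_of_forall_hammingDist_le y fun i => by fin_cases i <;> assumption
  rw [radius_pair, radius_pair, radius_pair, ← hM]
  exact ⟨upper.antisymm lower, upper.antisymm lower⟩
end

section
/- Singleton-type bound: let k ≥ 2, 1 ≤ d ≤ n, and let C ⊆ H_n be a code such that every k-tuple of pairwise distinct elements of C has generalized Hamming distance at least d. Then card(C) ≤ (k-1) · 2^{n-d+1}. -/
/-! Words of `C` that agree on a set `S` of coordinates form tuples of generalized distance
at most `n - #S`. If `n - #S < d`, fewer than `k` words of `C` can therefore share a pattern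
on `S`, and with `#S = n + 1 - d` pigeonhole over the `2 ^ #S` patterns gives the bound. -/

open Finset

def IsGdistCode {n : ℕ} (k d : ℕ) (C : Finset (Fin n → ZMod 2)) : Prop :=
  ∀ x : Fin k → Fin n → ZMod 2, (∀ i, x i ∈ C) → Function.Injective x → d ≤ gdist x

theorem gdist_le_sub_card_of_forall_eq {n k : ℕ} (x : Fin k → Fin n → ZMod 2)
    (S : Finset (Fin n)) (hS : ∀ j ∈ S, ∀ i i', x i j = x i' j) :
    gdist x ≤ n - #S := by
  have hsub : ({j | ¬ ∀ i i', x i j = x i' j} : Finset (Fin n)) ⊆ Sᶜ := fun j hj =>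
    mem_compl.2 fun hjS => (mem_filter.1 hj).2 (hS j hjS)
  simpa [gdist, card_compl] using card_le_card hsub

theorem Finset.exists_injective_fin_of_le_card {α : Type*} {s : Finset α} {k : ℕ}
    (h : k ≤ #s) : ∃ x : Fin k → α, Function.Injective x ∧ ∀ i, x i ∈ s := by
  obtain ⟨e⟩ := Function.Embedding.nonempty_of_card_le (α := Fin k) (β := s) (by simpa using h)
  exact ⟨fun i => e i, fun i i' hii => e.injective (Subtype.ext hii), fun i => (e i).2⟩

theorem IsGdistCode.card_filter_restrict_eq_lt {n k d : ℕ} {C : Finset (Fin n → ZMod 2)}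
    (hC : IsGdistCode k d C) {S : Finset (Fin n)} (hS : n - #S < d) (a : S → ZMod 2) :
    #{y ∈ C | S.restrict y = a} < k := by
  by_contra! hk
  obtain ⟨x, hx_inj, hx_mem⟩ := exists_injective_fin_of_le_card hk
  have hx_pattern : ∀ i, S.restrict (x i) = a := fun i => (mem_filter.1 (hx_mem i)).2
  have hx_agree : ∀ j ∈ S, ∀ i i', x i j = x i' j := fun j hj i i' => by
    simpa using congrFun ((hx_pattern i).trans (hx_pattern i').symm) ⟨j, hj⟩
  have hd_le := hC x (fun i => (mem_filter.1 (hx_mem i)).1) hx_inj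
  have hgdist_le := gdist_le_sub_card_of_forall_eq x S hx_agree
  omega

theorem IsGdistCode.card_le {n k d : ℕ} {C : Finset (Fin n → ZMod 2)}
    (hC : IsGdistCode k d C) {S : Finset (Fin n)} (hS : n - #S < d) :
    #C ≤ (k - 1) * 2 ^ #S := by
  calc #C ≤ (k - 1) * #(univ : Finset (S → ZMod 2)) :=
        card_le_mul_card_image_of_maps_to (fun _ _ => mem_univ _) _
          fun a _ => Nat.le_sub_one_of_lt (hC.card_filter_restrict_eq_lt hS a)
    _ = (k - 1) * 2 ^ #S := by simp

theorem singleton_bound_general {n k d : ℕ} (hd1 : 1 ≤ d)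
    (C : Finset (Fin n → ZMod 2))
    (h : ∀ x : Fin k → Fin n → ZMod 2, (∀ i, x i ∈ C) →
      Function.Injective x → d ≤ gdist x) :
    C.card ≤ (k - 1) * 2 ^ (n - d + 1) := by
  obtain ⟨S, -, hS⟩ := exists_subset_card_eq (s := (univ : Finset (Fin n))) (n := n + 1 - d)
    (by rw [card_univ, Fintype.card_fin]; omega)
  calc C.card ≤ (k - 1) * 2 ^ #S := IsGdistCode.card_le h (by omega)
    _ ≤ (k - 1) * 2 ^ (n - d + 1) :=
        Nat.mul_le_mul_left _ (Nat.pow_le_pow_right two_pos (by omega))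

/-- Singleton-type bound: if every `k`-tuple of pairwise distinct elements of
`C ⊆ H_n` has generalized Hamming distance at least `d`, then
`|C| ≤ (k-1)·2^{n-d+1}`. -/
theorem singleton_bound {n k d : ℕ} (hk : 2 ≤ k) (hd1 : 1 ≤ d) (hdn : d ≤ n)
    (C : Finset (Fin n → ZMod 2))
    (h : ∀ x : Fin k → Fin n → ZMod 2, (∀ i, x i ∈ C) →
      Function.Injective x → d ≤ gdist x) :
    C.card ≤ (k - 1) * 2 ^ (n - d + 1) :=
  singleton_bound_general hd1 C h
end

section
/- Hamming-type bound: let k ≥ 2, r ≥ 1, and let C ⊆ H_n be a code such that every k-tuple of pairwise distinct elements of C has radius at least r. Then card(C) · ∑_{j=0}^{r-1} binom(n, j) ≤ (k-1) · 2^n. -/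
open Finset

theorem radius_le_sup_hammingDist {n k : ℕ} (x : Fin k → Fin n → ZMod 2) (y : Fin n → ZMod 2) :
    radius x ≤ univ.sup fun i => hammingDist y (x i) :=
  inf'_le _ (mem_univ y)

theorem card_hammingNorm_eq_choose (n j : ℕ) :
    #{z : Fin n → ZMod 2 | hammingNorm z = j} = n.choose j := by
  have indicator_support : ∀ a : ZMod 2, (if a ≠ 0 then 1 else 0) = a := by decide
  calc #{z : Fin n → ZMod 2 | hammingNorm z = j}
      = #(powersetCard j (univ : Finset (Fin n))) := by
        refine card_nbij' (fun z => ({i | z i ≠ 0} : Finset (Fin n)))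
          (fun s i => if i ∈ s then 1 else 0) ?_ ?_ ?_ ?_
        · intro z hz
          simpa [mem_powersetCard_univ, hammingNorm] using hz
        · intro s hs
          simpa [hammingNorm] using mem_powersetCard_univ.mp hs
        · intro z _
          funext i
          simpa using indicator_support (z i)
        · intro s _
          ext i
          by_cases hi : i ∈ s <;> simp [hi]
    _ = n.choose j := by simp

theorem card_hammingDist_lt_eq_sum_choose (n r : ℕ) (c : Fin n → ZMod 2) :
    #{y : Fin n → ZMod 2 | hammingDist y c < r} = ∑ j ∈ range r, n.choose j := by
  have translate : #{y : Fin n → ZMod 2 | hammingDist y c < r} =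
      #{z : Fin n → ZMod 2 | hammingNorm z < r} := by
    refine card_nbij' (-c + ·) (c + ·) ?_ ?_ ?_ ?_
    · intro y hy
      simp only [coe_filter, mem_univ, true_and, Set.mem_ofPred_eq] at hy ⊢
      rwa [hammingDist_comm, hammingDist_eq_hammingNorm] at hy
    · intro z hz
      simp only [coe_filter, mem_univ, true_and, Set.mem_ofPred_eq] at hz ⊢
      rwa [hammingDist_comm, hammingDist_eq_hammingNorm, neg_add_cancel_left]
    · intro y _
      simp
    · intro z _
      simp
  rw [translate, card_eq_sum_card_fiberwise (f := hammingNorm) (t := range r)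
    (fun z hz => mem_range.mpr (mem_filter.mp hz).2)]
  refine sum_congr rfl fun j hj => ?_
  rw [filter_filter, ← card_hammingNorm_eq_choose n j]
  congr 1
  ext z
  simp only [mem_filter, mem_univ, true_and, and_iff_right_iff_imp]
  exact fun hz => hz ▸ mem_range.mp hj

theorem card_filter_hammingDist_lt_le {n k r : ℕ} (C : Finset (Fin n → ZMod 2))
    (h : ∀ x : Fin k → Fin n → ZMod 2, (∀ i, x i ∈ C) → Function.Injective x → r ≤ radius x)
    (y : Fin n → ZMod 2) :
    #{c ∈ C | hammingDist y c < r} ≤ k - 1 := by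
  by_contra! hlt
  set S := {c ∈ C | hammingDist y c < r}
  obtain ⟨c, hc⟩ : S.Nonempty := card_pos.mp (by omega)
  have hr : 0 < r := Nat.zero_lt_of_lt (mem_filter.mp hc).2
  obtain ⟨s, hsS, hs⟩ := exists_subset_card_eq (show k ≤ #S by omega)
  let e := equivFinOfCardEq hs
  let x : Fin k → Fin n → ZMod 2 := fun i => e.symm i
  have hxS : ∀ i, x i ∈ S := fun i => hsS (e.symm i).2
  have hx_inj : Function.Injective x := Subtype.val_injective.comp e.symm.injective
  have radius_lt : radius x < r :=
    (radius_le_sup_hammingDist x y).trans_lt <|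
      (Finset.sup_lt_iff hr).mpr fun i _ => (mem_filter.mp (hxS i)).2
  exact (h x (fun i => (mem_filter.mp (hxS i)).1) hx_inj).not_gt radius_lt

theorem hamming_type_bound_general {n k r : ℕ}
    (C : Finset (Fin n → ZMod 2))
    (h : ∀ x : Fin k → Fin n → ZMod 2, (∀ i, x i ∈ C) →
      Function.Injective x → r ≤ radius x) :
    C.card * ∑ j ∈ Finset.range r, Nat.choose n j ≤ (k - 1) * 2 ^ n := by
  have double_count := card_mul_le_card_mul (s := C) (t := univ)
    (r := fun c y => hammingDist y c < r)
    (fun c _ => (card_hammingDist_lt_eq_sum_choose n r c).ge)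
    (fun y _ => card_filter_hammingDist_lt_le C h y)
  simpa [mul_comm, Fintype.card_fun, ZMod.card] using double_count

/-- Hamming-type bound: if every `k`-tuple of pairwise distinct elements of
`C ⊆ H_n` has radius at least `r`, then `|C| · b_{r-1} ≤ (k-1)·2^n`,
where `b_{r-1} = ∑_{j=0}^{r-1} C(n,j)` is the cardinality of a Hamming
ball of radius `r - 1`. -/
theorem hamming_type_bound {n k r : ℕ} (hk : 2 ≤ k) (hr : 1 ≤ r)
    (C : Finset (Fin n → ZMod 2))
    (h : ∀ x : Fin k → Fin n → ZMod 2, (∀ i, x i ∈ C) →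
      Function.Injective x → r ≤ radius x) :
    C.card * ∑ j ∈ Finset.range r, Nat.choose n j ≤ (k - 1) * 2 ^ n :=
  hamming_type_bound_general C h
end

section
/- Plotkin-type bound: let k ≥ 2 and let C ⊆ H_n be a code with M = card(C) ≥ k elements such that every k-tuple of pairwise distinct elements of C has generalized Hamming distance at least D. Then, as real numbers, D · ∏_{t=0}^{k-1}(M − t) ≤ n · ( ∏_{t=0}^{k-1}(M − t) − 2 · P ), where P = ∏_{t=0}^{k-1}(M/2 − t) if M/2 ≥ k−1 and P = 0 otherwise. (Equivalently, D/n ≤ 1 − 2·binom(M/2, k)/binom(M, k) with the generalized binomial coefficient binom(x,k) = j_k(x)/k!, j_k(x) = ∏_{t=0}^{k-1}(x−t) for x ≥ k−1 and j_k(x) = 0 for x ≤ k−1.) -/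
open Finset

section InjTuples

variable {α β : Type*} [Fintype α] [DecidableEq α] [Fintype β] [DecidableEq β]

noncomputable def injTuples (α : Type*) [Fintype α] [DecidableEq α] (s : Finset β) :
    Finset (α ↪ β) :=
  {e | ∀ a, e a ∈ s}

theorem mem_injTuples {s : Finset β} {e : α ↪ β} : e ∈ injTuples α s ↔ ∀ a, e a ∈ s := by
  simp [injTuples]

theorem card_injTuples (s : Finset β) :
    #(injTuples α s) = (#s).descFactorial (Fintype.card α) := by
  rw [injTuples, ← Fintype.card_subtype, ← Fintype.card_coe s, ← Fintype.card_embedding_eq]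
  exact Fintype.card_congr (Equiv.codRestrict α (s : Set β))

variable {ι A : Type*} [Fintype ι] [DecidableEq ι] [Fintype A] [DecidableEq A]

theorem card_filter_injTuples_const_at [Nonempty α] (C : Finset (ι → A)) (j : ι) :
    #{e ∈ injTuples α C | ∀ a a', e a j = e a' j} =
      ∑ v, (#{c ∈ C | c j = v}).descFactorial (Fintype.card α) := by
  obtain ⟨a₀⟩ := ‹Nonempty α›
  rw [card_eq_sum_card_fiberwise (f := fun e => e a₀ j) (t := univ)
    fun _ _ => mem_coe.2 (mem_univ _)]
  refine sum_congr rfl fun v _ => ?_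
  rw [← card_injTuples]
  congr 1
  ext e
  simp only [mem_filter, mem_injTuples]
  constructor
  · rintro ⟨⟨hC, hconst⟩, rfl⟩ a
    exact ⟨hC a, hconst a a₀⟩
  · intro h
    exact ⟨⟨fun a => (h a).1, fun a a' => (h a).2.trans (h a').2.symm⟩, (h a₀).2⟩

end InjTuples

theorem card_mul_descPochhammer_eval_le_sum_descFactorial {A : Type*} [Fintype A] [Nonempty A]
    {k m : ℕ} (hk : k ≠ 0) (p : A → ℕ) (hp : ∑ v, p v = m)
    (h : (k : ℝ) - 1 ≤ m / Fintype.card A) :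
    Fintype.card A * (descPochhammer ℝ k).eval ((m : ℝ) / Fintype.card A) ≤
      ∑ v, ((p v).descFactorial k : ℝ) := by
  have hq : (0 : ℝ) < Fintype.card A := by exact_mod_cast Fintype.card_pos
  have jensen := descPochhammer_eval_le_sum_descFactorial hk (t := univ) p
    (fun _ => (Fintype.card A : ℝ)⁻¹) (fun _ _ => by positivity) (by simp [hq.ne'])
    (by rwa [← mul_sum, ← Nat.cast_sum, hp, inv_mul_eq_div])
  rwa [← mul_sum, ← mul_sum, ← Nat.cast_sum, hp, inv_mul_eq_div, le_inv_mul_iff₀ hq] at jensen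

theorem sum_gdist_eq_sum_card_filter_not_forall_eq {n k : ℕ}
    (T : Finset (Fin k ↪ (Fin n → ZMod 2))) :
    ∑ e ∈ T, gdist ⇑e = ∑ j, #{e ∈ T | ¬ ∀ i i', e i j = e i' j} :=
  sum_card_bipartiteAbove_eq_sum_card_bipartiteBelow _

theorem plotkin_type_bound_general {n k D : ℕ} (hk : 2 ≤ k)
    (C : Finset (Fin n → ZMod 2))
    (h : ∀ x : Fin k → Fin n → ZMod 2, (∀ i, x i ∈ C) →
      Function.Injective x → D ≤ gdist x) :
    (D : ℝ) * ∏ t ∈ Finset.range k, ((C.card : ℝ) - t) ≤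
      (n : ℝ) * ((∏ t ∈ Finset.range k, ((C.card : ℝ) - t)) -
        2 * (if ((k : ℝ) - 1) ≤ (C.card : ℝ) / 2 then
              ∏ t ∈ Finset.range k, ((C.card : ℝ) / 2 - t)
            else 0)) := by
  set T := injTuples (Fin k) C
  set P : ℝ := if ((k : ℝ) - 1) ≤ (C.card : ℝ) / 2 then
    ∏ t ∈ Finset.range k, ((C.card : ℝ) / 2 - t) else 0 with hP_def
  have : Nonempty (Fin k) := ⟨⟨0, by omega⟩⟩
  have hT : (#T : ℝ) = ∏ t ∈ range k, ((#C : ℝ) - t) := by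
    rw [card_injTuples, Fintype.card_fin, ← descPochhammer_eval_eq_prod_range,
      descPochhammer_eval_eq_descFactorial]
  have hP : ∀ j, 2 * P ≤ ∑ v, ((#{c ∈ C | c j = v}).descFactorial k : ℝ) := by
    intro j
    have hsum : ∑ v, #{c ∈ C | c j = v} = #C :=
      (card_eq_sum_card_fiberwise fun _ _ => mem_coe.2 (mem_univ _)).symm
    rw [hP_def]
    split_ifs with hbig
    · have := card_mul_descPochhammer_eval_le_sum_descFactorial (k := k) (by omega) _ hsum
        (by rwa [ZMod.card, Nat.cast_ofNat])
      rwa [ZMod.card, Nat.cast_ofNat, descPochhammer_eval_eq_prod_range] at this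
    · simp only [mul_zero]
      positivity
  have hcoord : ∀ j, (#{e ∈ T | ¬ ∀ i i', e i j = e i' j} : ℝ) ≤ #T - 2 * P := by
    intro j
    have hsplit : #{e ∈ T | ∀ i i', e i j = e i' j} + #{e ∈ T | ¬ ∀ i i', e i j = e i' j} = #T :=
      card_filter_add_card_filter_not _
    have hconst : #{e ∈ T | ∀ i i', e i j = e i' j} =
        ∑ v, (#{c ∈ C | c j = v}).descFactorial k := by
      convert card_filter_injTuples_const_at (α := Fin k) C j
      exact (Fintype.card_fin k).symm
    rw [hconst] at hsplit
    rw [← hsplit]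
    push_cast
    linarith [hP j]
  have hD : ∀ e ∈ T, D ≤ gdist ⇑e := fun e he => h e (mem_injTuples.1 he) e.injective
  calc (D : ℝ) * ∏ t ∈ range k, ((#C : ℝ) - t) = (#T • D : ℕ) := by
        rw [smul_eq_mul, Nat.cast_mul, hT, mul_comm]
    _ ≤ (∑ e ∈ T, gdist ⇑e : ℕ) := by exact_mod_cast card_nsmul_le_sum T _ D hD
    _ = ∑ j, (#{e ∈ T | ¬ ∀ i i', e i j = e i' j} : ℝ) := by
        rw [sum_gdist_eq_sum_card_filter_not_forall_eq, Nat.cast_sum]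
    _ ≤ ∑ _j : Fin n, ((#T : ℝ) - 2 * P) := sum_le_sum fun j _ => hcoord j
    _ = n * (∏ t ∈ range k, ((#C : ℝ) - t) - 2 * P) := by simp [hT, mul_sub]

/-- Plotkin-type bound: if `C ⊆ H_n` has `M ≥ k` elements and every `k`-tuple
of pairwise distinct elements of `C` has generalized Hamming distance at
least `D`, then `D · j_k(M) ≤ n · (j_k(M) - 2 · j_k(M/2))` where
`j_k(x) = ∏_{t=0}^{k-1}(x - t)` for `x ≥ k - 1` and `j_k(x) = 0` otherwise
(equivalently `D/n ≤ 1 - 2·C(M/2,k)/C(M,k)`). -/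
theorem plotkin_type_bound {n k D : ℕ} (hk : 2 ≤ k)
    (C : Finset (Fin n → ZMod 2)) (hM : k ≤ C.card)
    (h : ∀ x : Fin k → Fin n → ZMod 2, (∀ i, x i ∈ C) →
      Function.Injective x → D ≤ gdist x) :
    (D : ℝ) * ∏ t ∈ Finset.range k, ((C.card : ℝ) - t) ≤
      (n : ℝ) * ((∏ t ∈ Finset.range k, ((C.card : ℝ) - t)) -
        2 * (if ((k : ℝ) - 1) ≤ (C.card : ℝ) / 2 then
              ∏ t ∈ Finset.range k, ((C.card : ℝ) / 2 - t)
            else 0)) :=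
  plotkin_type_bound_general hk C h
end

section
/- Plotkin-type bound for linear codes and affine generalized distances: let k ≥ 2 and let C ⊆ H_n be an F_2-linear subspace with M = card(C) elements that contains at least one k-tuple of affinely independent elements, and suppose that every k-tuple of affinely independent elements of C has generalized Hamming distance at least D. Then D · 2^{k-1} · (M − 1) ≤ n · (2^{k-1} − 1) · M. (Equivalently, D/n ≤ (1 − 2^{-(k-1)}) · M/(M−1).) -/
open Finset Module

/-- For `r > m` the factor `i = m` vanishes, matching the absence of independent tuples. -/
def linIndepCount (q m r : ℕ) : ℕ := ∏ i : Fin r, (q ^ m - q ^ (i : ℕ))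

lemma linIndepCount_succ (q m r : ℕ) :
    linIndepCount q m (r + 1) = linIndepCount q m r * (q ^ m - q ^ r) :=
  Fin.prod_univ_castSucc _

lemma linIndepCount_mono {q : ℕ} (hq : 0 < q) {m m' : ℕ} (h : m ≤ m') (r : ℕ) :
    linIndepCount q m r ≤ linIndepCount q m' r := by
  unfold linIndepCount
  gcongr

lemma linIndepCount_pos {q : ℕ} (hq : 1 < q) {m r : ℕ} (h : r ≤ m) :
    0 < linIndepCount q m r :=
  prod_pos fun i _ => Nat.sub_pos_of_lt (Nat.pow_lt_pow_right hq (by omega))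

/-- The proportion of independent `r`-tuples of `𝔽_q^(m+1)` that lie in a fixed hyperplane is
`(q^(m+1) - q^r) / ((q^(m+1) - 1) q^r)`. -/
lemma pow_sub_one_mul_linIndepCount (q m r : ℕ) :
    (q ^ (m + 1) - 1) * q ^ r * linIndepCount q m r =
      (q ^ (m + 1) - q ^ r) * linIndepCount q (m + 1) r := by
  induction r with
  | zero => simp [linIndepCount]
  | succ r ih =>
    calc (q ^ (m + 1) - 1) * q ^ (r + 1) * linIndepCount q m (r + 1)
        = (q ^ (m + 1) - 1) * q ^ r * linIndepCount q m r * (q * (q ^ m - q ^ r)) := by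
          rw [linIndepCount_succ]; ring
      _ = (q ^ (m + 1) - q ^ r) * linIndepCount q (m + 1) r * (q ^ (m + 1) - q ^ (r + 1)) := by
          rw [ih, mul_tsub, ← pow_succ', ← pow_succ']
      _ = _ := by rw [linIndepCount_succ]; ring

lemma mul_pow_le_of_mul_linIndepCount_le {q m r D n : ℕ} (hq : 1 < q) (hrm : r ≤ m)
    (h : D * linIndepCount q m r ≤ n * (linIndepCount q m r - linIndepCount q (m - 1) r)) :
    D * q ^ r * (q ^ m - 1) ≤ n * (q ^ r - 1) * q ^ m := by
  obtain _ | m := m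
  · obtain rfl : r = 0 := by omega
    simp_all
  have hN := linIndepCount_pos hq hrm
  have hPN := linIndepCount_mono (q := q) (by omega) (Nat.sub_le (m + 1) 1) r
  have hkey := pow_sub_one_mul_linIndepCount q m r
  have hR : 1 ≤ q ^ r := Nat.one_le_pow _ _ (by omega)
  have hRQ : q ^ r ≤ q ^ (m + 1) := Nat.pow_le_pow_right (by omega) hrm
  simp only [Nat.add_sub_cancel] at h hPN
  refine Nat.le_of_mul_le_mul_right ?_ hN
  have hQ : (1 : ℤ) ≤ q ^ (m + 1) := by exact_mod_cast hR.trans hRQ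
  zify [hPN, hR, hRQ, hR.trans hRQ] at h hkey ⊢
  nlinarith [mul_le_mul_of_nonneg_left h
    (mul_nonneg (by positivity) (by linarith) : (0 : ℤ) ≤ q ^ r * (q ^ (m + 1) - 1))]

theorem Module.Dual.finrank_le_finrank_ker_add_one {K V : Type*} [DivisionRing K]
    [AddCommGroup V] [Module K V] [FiniteDimensional K V] (f : Module.Dual K V) :
    finrank K V ≤ finrank K (LinearMap.ker f) + 1 := by
  rcases eq_or_ne f 0 with rfl | hf
  · rw [LinearMap.ker_zero, finrank_top]; omega
  · exact (f.finrank_ker_add_one_of_ne_zero hf).ge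

section FiniteSpace

variable {K V : Type*} [DivisionRing K] [Fintype K] [AddCommGroup V] [Module K V]

local notation "q" => Fintype.card K

section

variable [Finite V]

theorem card_linearIndependent_eq_linIndepCount (r : ℕ) :
    Nat.card {v : Fin r → V // LinearIndependent K v} = linIndepCount q (finrank K V) r := by
  by_cases hr : r ≤ finrank K V
  · exact card_linearIndependent hr
  · have : IsEmpty {v : Fin r → V // LinearIndependent K v} :=
      ⟨fun ⟨v, hv⟩ => hr (by simpa using hv.fintype_card_le_finrank)⟩
    rw [Nat.card_of_isEmpty, linIndepCount, eq_comm]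
    exact prod_eq_zero (mem_univ ⟨finrank K V, by omega⟩) (Nat.sub_self _)

theorem card_linearIndependent_forall_mem (W : Submodule K V) (r : ℕ) :
    Nat.card {v : Fin r → V // LinearIndependent K v ∧ ∀ i, v i ∈ W} =
      linIndepCount q (finrank K W) r := by
  rw [← card_linearIndependent_eq_linIndepCount]
  refine Nat.card_congr
    { toFun := fun v => ⟨fun i => ⟨v.1 i, v.2.2 i⟩, .of_comp W.subtype v.2.1⟩
      invFun := fun w => ⟨fun i => w.1 i, w.2.map' W.subtype W.ker_subtype, fun i => (w.1 i).2⟩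
      left_inv := fun _ => rfl
      right_inv := fun _ => rfl }

end

variable [Fintype V]

open scoped Classical in
theorem card_filter_linearIndependent (r : ℕ) :
    #{v : Fin r → V | LinearIndependent K v} = linIndepCount q (finrank K V) r := by
  simpa only [Nat.card_eq_fintype_card, Fintype.card_subtype] using
    card_linearIndependent_eq_linIndepCount (K := K) (V := V) r

open scoped Classical in
theorem card_filter_linearIndependent_exists_apply_ne_le [DecidableEq K] (f : Module.Dual K V)
    (r : ℕ) :
    #{v : Fin r → V | LinearIndependent K v ∧ ∃ i, f (v i) ≠ 0} ≤
      linIndepCount q (finrank K V) r - linIndepCount q (finrank K V - 1) r := by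
  have hall := card_filter_linearIndependent (K := K) (V := V) r
  have hker : linIndepCount q (finrank K V - 1) r ≤
      #{v : Fin r → V | LinearIndependent K v ∧ ∀ i, f (v i) = 0} := by
    have := card_linearIndependent_forall_mem (LinearMap.ker f) r
    simp only [Nat.card_eq_fintype_card, Fintype.card_subtype, LinearMap.mem_ker] at this
    rw [this]
    have := f.finrank_le_finrank_ker_add_one
    exact linIndepCount_mono Fintype.card_pos (by omega) r
  have hsplit := card_filter_add_card_filter_not
    (s := {v : Fin r → V | LinearIndependent K v}) (p := fun v => ∀ i, f (v i) = 0)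
  simp only [filter_filter, not_forall, ← ne_eq] at hsplit
  omega

open scoped Classical in
theorem sum_card_filter_exists_apply_ne_le [DecidableEq K] {ι : Type*} [Fintype ι]
    (f : ι → Module.Dual K V) (r : ℕ) :
    ∑ v : Fin r → V with LinearIndependent K v, #{j | ∃ i, f j (v i) ≠ 0} ≤
        Fintype.card ι *
        (linIndepCount q (finrank K V) r - linIndepCount q (finrank K V - 1) r) := by
  calc ∑ v : Fin r → V with LinearIndependent K v, #{j | ∃ i, f j (v i) ≠ 0}
      = ∑ j, #{v : Fin r → V | LinearIndependent K v ∧ ∃ i, f j (v i) ≠ 0} := by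
        simpa [bipartiteAbove, bipartiteBelow, filter_filter] using
          sum_card_bipartiteAbove_eq_sum_card_bipartiteBelow (t := univ)
            (s := {v : Fin r → V | LinearIndependent K v})
            (r := fun v j => ∃ i, f j (v i) ≠ 0)
    _ ≤ ∑ _j : ι, (linIndepCount q (finrank K V) r - linIndepCount q (finrank K V - 1) r) :=
        sum_le_sum fun j _ => card_filter_linearIndependent_exists_apply_ne_le (f j) r
    _ = _ := by rw [sum_const, card_univ, smul_eq_mul]

end FiniteSpace

theorem LinearIndependent.affineIndependent_finCons_zero {K V : Type*} [Ring K] [AddCommGroup V]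
    [Module K V] {r : ℕ} {y : Fin r → V} (hy : LinearIndependent K y) :
    AffineIndependent K (Fin.cons 0 y : Fin (r + 1) → V) := by
  rw [affineIndependent_iff_linearIndependent_vsub K _ 0,
    ← linearIndependent_equiv (finSuccAboveEquiv 0)]
  simpa [Function.comp_def, finSuccAboveEquiv_apply] using hy

theorem AffineIndependent.card_le_finrank_succ_of_forall_mem {K V ι : Type*} [DivisionRing K]
    [AddCommGroup V] [Module K V] [Fintype ι] {W : Submodule K V} [FiniteDimensional K W]
    {p : ι → V} (hp : AffineIndependent K p) (hpW : ∀ i, p i ∈ W) :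
    Fintype.card ι ≤ finrank K W + 1 := by
  refine hp.card_le_finrank_succ.trans (Nat.add_le_add_right (Submodule.finrank_mono ?_) 1)
  rw [vectorSpan_def, Submodule.span_le]
  rintro _ ⟨_, ⟨i, rfl⟩, _, ⟨j, rfl⟩, rfl⟩
  exact W.sub_mem (hpW i) (hpW j)

theorem gdist_finCons_zero {n r : ℕ} (y : Fin r → Fin n → ZMod 2) :
    gdist (Fin.cons 0 y : Fin (r + 1) → Fin n → ZMod 2) = #{j | ∃ i, y i j ≠ 0} := by
  unfold gdist
  congr 1
  ext j
  simp only [mem_filter, mem_univ, true_and, Fin.forall_fin_succ, Fin.cons_zero, Fin.cons_succ,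
    Pi.zero_apply]
  grind

/-- Plotkin-type bound for linear codes: if `C ⊆ H_n` is an `F₂`-linear code
with `M` elements containing `k` affinely independent elements, and every
`k`-tuple of affinely independent elements of `C` has generalized Hamming
distance at least `D`, then `D · 2^{k-1} · (M - 1) ≤ n · (2^{k-1} - 1) · M`
(equivalently `D/n ≤ (1 - 2^{-(k-1)}) · M/(M-1)`). -/
theorem plotkin_type_bound_linear {n k D : ℕ} (hk : 2 ≤ k)
    (C : Submodule (ZMod 2) (Fin n → ZMod 2))
    (hex : ∃ x : Fin k → Fin n → ZMod 2,
      (∀ i, x i ∈ C) ∧ AffineIndependent (ZMod 2) x)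
    (h : ∀ x : Fin k → Fin n → ZMod 2, (∀ i, x i ∈ C) →
      AffineIndependent (ZMod 2) x → D ≤ gdist x) :
    D * 2 ^ (k - 1) * (Nat.card C - 1) ≤ n * (2 ^ (k - 1) - 1) * Nat.card C := by
  classical
  obtain ⟨r, rfl⟩ : ∃ r, k = r + 1 := ⟨k - 1, by omega⟩
  obtain ⟨x, hxC, hx⟩ := hex
  have hrm : r ≤ finrank (ZMod 2) C := by
    simpa using hx.card_le_finrank_succ_of_forall_mem hxC
  let f : Fin n → Module.Dual (ZMod 2) C := fun j => (LinearMap.proj j).comp C.subtype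
  have hD : D * #{v : Fin r → C | LinearIndependent (ZMod 2) v} ≤
      ∑ v : Fin r → C with LinearIndependent (ZMod 2) v, #{j | ∃ i, f j (v i) ≠ 0} := by
    rw [mul_comm, ← smul_eq_mul, ← sum_const]
    refine sum_le_sum fun v hv => ?_
    rw [← gdist_finCons_zero]
    refine h _ (Fin.cases C.zero_mem fun i => (v i).2) ?_
    exact ((mem_filter.1 hv).2.map' C.subtype C.ker_subtype).affineIndependent_finCons_zero
  rw [card_filter_linearIndependent, ZMod.card] at hD
  rw [Nat.card_eq_fintype_card, card_eq_pow_finrank (K := ZMod 2) (V := C), ZMod.card,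
    Nat.add_sub_cancel]
  refine mul_pow_le_of_mul_linIndepCount_le one_lt_two hrm ?_
  simpa only [Fintype.card_fin, ZMod.card] using
    hD.trans (sum_card_filter_exists_apply_ne_le f r)
end
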